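/- Let G and G' be finitely generated Abelian groups. If G and G' admit isomorphic Cayley graphs, i.e., there exist finite generating sets S ⊆ G and S' ⊆ G' with Cay(G,S) ≅ Cay(G',S'), then rk G = rk G'. -/

import Mathlib

/-- The Cayley graph of an (additive) group `G` with respect to a subset `S`:
vertices are elements of `G`, and `g`, `h` are adjacent iff `h - g ∈ (S ∪ -S) \ {0}`. -/
def cayley {G : Type*} [AddCommGroup G] (S : Set G) : SimpleGraph G where
  Adj g h := g ≠ h ∧ (h - g ∈ S ∨ g - h ∈ S)
  symm := ⟨fun _ _ hadj => ⟨hadj.1.symm, hadj.2.symm⟩⟩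
  loopless := ⟨fun _ hadj => hadj.1 rfl⟩

/-- `p 0, p 1, …, p n` is a geodesic segment in `Γ`: a path whose length realizes
the distance between its endpoints. -/
def IsGeodesicSegment {V : Type*} (Γ : SimpleGraph V) (n : ℕ) (p : ℕ → V) : Prop :=
  (∀ i < n, Γ.Adj (p i) (p (i + 1))) ∧ Γ.dist (p 0) (p n) = n

/-- A geodesic line in `Γ`. -/
def IsGeodesicLine {V : Type*} (Γ : SimpleGraph V) (γ : ℤ → V) : Prop :=
  ∀ j k : ℤ, Γ.dist (γ j) (γ k) = (j - k).natAbs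

/-- A convex geodesic line: a geodesic line such that for all `n ≤ m` the only geodesic
segment from `γ n` to `γ m` is `(γ n, γ (n+1), …, γ m)`. -/
def IsConvexGeodesicLine {V : Type*} (Γ : SimpleGraph V) (γ : ℤ → V) : Prop :=
  IsGeodesicLine Γ γ ∧
    ∀ n m : ℤ, n ≤ m → ∀ (k : ℕ) (p : ℕ → V),
      IsGeodesicSegment Γ k p → p 0 = γ n → p k = γ m →
        ∀ j ≤ k, p j = γ (n + j)

/-- A quasi-convex geodesic line: a geodesic line such that geodesic segments joining
points `c`-close to the line stay uniformly `C`-close to it (fellow-traveller style). -/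
def IsQuasiConvexGeodesicLine {V : Type*} (Γ : SimpleGraph V) (γ : ℤ → V) : Prop :=
  IsGeodesicLine Γ γ ∧
    ∀ c : ℕ, ∃ C : ℕ, ∀ n m : ℤ, n ≤ m → ∀ x y : V,
      Γ.dist x (γ n) ≤ c → Γ.dist y (γ m) ≤ c →
        ∀ p : ℕ → V, IsGeodesicSegment Γ (Γ.dist x y) p →
          p 0 = x → p (Γ.dist x y) = y →
            ∀ j ≤ Γ.dist x y, Γ.dist (p j) (γ (n + j)) ≤ C

/-- A quasi-algebraic line of quasi-type `t ∈ G/tors G` in `Cay(G,S)`: a ℤ-path in the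
Cayley graph all of whose steps project to `t` in `G/tors G`. -/
def IsQuasiAlgebraicLine {G : Type*} [AddCommGroup G] (S : Set G)
    (t : G ⧸ AddCommGroup.torsion G) (γ : ℤ → G) : Prop :=
  (∀ n : ℤ, (cayley S).Adj (γ n) (γ (n + 1))) ∧
    ∀ n : ℤ, QuotientAddGroup.mk' (AddCommGroup.torsion G) (γ (n + 1) - γ n) = t

/-!
Balls around a vertex of `Cay(G,S)` are determined by the graph alone, because translations act
transitively by graph automorphisms; so it suffices to show that the rank `r` of `G` is the degree
of polynomial growth of these balls. Write `G/tors G ≅ ℤ^r` and take coordinates `c : G →+ ℤ^r`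
with kernel `tors G` together with a section `ℓ : ℤ^r →+ G`. Each coordinate changes by at most
`M` along an edge, so the ball of radius `n` injects into `tors G × [-nM, nM]^r`; conversely `ℓ`
embeds the cube `[-k, k]^r` into the ball of radius `Dk`. Hence balls of radius `n` have between
roughly `(n/D)^r` and `C (n+1)^r` elements, and comparing these bounds across the isomorphism
shows that the ranks agree.
-/

open SimpleGraph

namespace SimpleGraph

variable {V W : Type*} {Γ : SimpleGraph V} {Δ : SimpleGraph W}

theorem Reachable.dist_map_le (f : Γ →g Δ) {u v : V} (h : Γ.Reachable u v) :
    Δ.dist (f u) (f v) ≤ Γ.dist u v := by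
  obtain ⟨p, hp⟩ := h.exists_walk_length_eq_dist
  simpa [hp] using dist_le (p.map f)

theorem Iso.dist_eq (φ : Γ ≃g Δ) (u v : V) : Δ.dist (φ u) (φ v) = Γ.dist u v := by
  by_cases h : Γ.Reachable u v
  · refine le_antisymm (h.dist_map_le φ.toHom) ?_
    simpa using ((Iso.reachable_iff (φ := φ)).2 h).dist_map_le φ.symm.toHom
  · rw [dist_eq_zero_of_not_reachable h,
      dist_eq_zero_of_not_reachable (mt Iso.reachable_iff.1 h)]

theorem Walk.abs_sub_le_mul_length {F : V → ℤ} {M : ℕ}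
    (hF : ∀ u v, Γ.Adj u v → |F v - F u| ≤ M) {u v : V} (p : Γ.Walk u v) :
    |F v - F u| ≤ M * p.length := by
  induction p with
  | nil => simp
  | @cons u v w huv p ih =>
    have := abs_sub_le (F w) (F v) (F u)
    push_cast [length_cons]
    linarith [hF u v huv]

theorem Reachable.abs_sub_le_mul_dist {F : V → ℤ} {M : ℕ}
    (hF : ∀ u v, Γ.Adj u v → |F v - F u| ≤ M) {u v : V} (h : Γ.Reachable u v) :
    |F v - F u| ≤ M * Γ.dist u v := by
  obtain ⟨p, hp⟩ := h.exists_walk_length_eq_dist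
  exact hp ▸ p.abs_sub_le_mul_length hF

end SimpleGraph

section Cayley

variable {G : Type*} [AddCommGroup G] (S : Set G)

def cayleyAddRight (a : G) : cayley S ≃g cayley S where
  toEquiv := Equiv.addRight a
  map_rel_iff' := by simp [cayley]

def cayleyNeg : cayley S ≃g cayley S where
  toEquiv := Equiv.neg G
  map_rel_iff' := by simp [cayley, neg_add_eq_sub, or_comm]

@[simp] theorem cayleyAddRight_apply (a g : G) : cayleyAddRight S a g = g + a := rfl

@[simp] theorem cayleyNeg_apply (g : G) : cayleyNeg S g = -g := rfl

theorem cayley_dist_eq_dist_zero_sub (g h : G) :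
    (cayley S).dist g h = (cayley S).dist 0 (h - g) := by
  simpa [sub_eq_add_neg] using ((cayleyAddRight S (-g)).dist_eq g h).symm

theorem cayley_dist_zero_neg (g : G) : (cayley S).dist 0 (-g) = (cayley S).dist 0 g := by
  simpa using (cayleyNeg S).dist_eq 0 g

variable {S}

theorem cayley_connected (hS : AddSubgroup.closure S = ⊤) : (cayley S).Connected := by
  refine (connected_iff_exists_forall_reachable _).2 ⟨0, fun g => ?_⟩
  induction (hS ▸ AddSubgroup.mem_top g : g ∈ AddSubgroup.closure S)
    using AddSubgroup.closure_induction with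
  | mem s hs =>
    by_cases h0 : s = 0
    · exact h0 ▸ Reachable.refl (G := cayley S) 0
    · exact Adj.reachable ⟨Ne.symm h0, Or.inl (by simpa using hs)⟩
  | zero => exact Reachable.refl 0
  | add x y _ _ hx hy =>
    exact hx.trans (by simpa [add_comm] using hy.map (cayleyAddRight S x).toHom)
  | neg x _ hx => simpa using hx.map (cayleyNeg S).toHom

theorem cayley_dist_zero_add_le (hS : AddSubgroup.closure S = ⊤) (x y : G) :
    (cayley S).dist 0 (x + y) ≤ (cayley S).dist 0 x + (cayley S).dist 0 y := by
  have := (cayley_connected hS).dist_triangle (u := 0) (v := x) (w := x + y)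
  rwa [cayley_dist_eq_dist_zero_sub S x, add_sub_cancel_left] at this

theorem cayley_dist_zero_sum_le (hS : AddSubgroup.closure S = ⊤) {ι : Type*} (t : Finset ι)
    (f : ι → G) : (cayley S).dist 0 (∑ i ∈ t, f i) ≤ ∑ i ∈ t, (cayley S).dist 0 (f i) :=
  Finset.le_sum_of_subadditive _ (dist_self ..).le (cayley_dist_zero_add_le hS) t f

theorem cayley_dist_zero_zsmul_le (hS : AddSubgroup.closure S = ⊤) (a : ℤ) (x : G) :
    (cayley S).dist 0 (a • x) ≤ a.natAbs * (cayley S).dist 0 x := by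
  have hnsmul (n : ℕ) : (cayley S).dist 0 (n • x) ≤ n * (cayley S).dist 0 x := by
    simpa using cayley_dist_zero_sum_le hS (Finset.range n) fun _ => x
  obtain ⟨n, rfl | rfl⟩ := Int.eq_nat_or_neg a
  · simpa using hnsmul n
  · simpa [cayley_dist_zero_neg] using hnsmul n

theorem abs_le_mul_cayley_dist (hS : AddSubgroup.closure S = ⊤) (f : G →+ ℤ) {M : ℕ}
    (hM : ∀ s ∈ S, |f s| ≤ M) (g : G) : |f g| ≤ M * (cayley S).dist 0 g := by
  have hF (u v : G) (huv : (cayley S).Adj u v) : |f v - f u| ≤ M := by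
    rcases huv.2 with h | h
    · simpa using hM _ h
    · simpa [abs_sub_comm] using hM _ h
  simpa using ((cayley_connected hS).preconnected 0 g).abs_sub_le_mul_dist hF

def cayleyBall (S : Set G) (n : ℕ) : Set G := {g | (cayley S).dist 0 g ≤ n}

theorem natCard_cayleyBall_eq_of_iso {G' : Type*} [AddCommGroup G'] {S' : Set G'}
    (φ : cayley S ≃g cayley S') (n : ℕ) :
    Nat.card (cayleyBall S n) = Nat.card (cayleyBall S' n) := by
  let ψ := φ.trans (cayleyAddRight S' (-φ 0))
  have hψ (g : G) : (cayley S').dist 0 (ψ g) = (cayley S).dist 0 g := by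
    rw [← Iso.dist_eq ψ 0 g]
    simp [ψ]
  exact Nat.card_congr (ψ.toEquiv.subtypeEquiv fun g => by simp [cayleyBall, ← hψ g])

end Cayley

local notation "rk " G:max => Module.finrank ℤ (G ⧸ AddCommGroup.torsion G)

section Coordinates

variable (G : Type*) [AddCommGroup G] [AddGroup.FG G]

theorem finite_torsion : Finite (AddCommGroup.torsion G) := by
  have : Module.Finite ℤ G := Module.Finite.iff_addGroup_fg.mpr ‹_›
  have : AddGroup.FG (AddCommGroup.torsion G) := Module.Finite.iff_addGroup_fg.mp
    (inferInstance : Module.Finite ℤ (AddSubgroup.toIntSubmodule (AddCommGroup.torsion G)))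
  exact AddCommGroup.finite_of_fg_isAddTorsion _ fun x =>
    AddSubmonoid.isOfFinAddOrder_coe.mp x.2

theorem exists_leftInverse_ker_eq_torsion :
    ∃ (c : G →+ (Fin (rk G) → ℤ)) (ℓ : (Fin (rk G) → ℤ) →+ G),
      Function.LeftInverse c ℓ ∧ c.ker = AddCommGroup.torsion G := by
  let π := QuotientAddGroup.mk' (AddCommGroup.torsion G)
  let b := Module.finBasis ℤ (G ⧸ AddCommGroup.torsion G)
  let c : G →+ (Fin (rk G) → ℤ) := b.equivFun.toLinearMap.toAddMonoidHom.comp π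
  have hc : Function.Surjective c :=
    b.equivFun.surjective.comp (QuotientAddGroup.mk'_surjective _)
  obtain ⟨ℓ, hℓ⟩ := Module.projective_lifting_property c.toIntLinearMap LinearMap.id hc
  refine ⟨c, ℓ.toAddMonoidHom, fun a => LinearMap.congr_fun hℓ a, ?_⟩
  ext g
  simp [c, π]

end Coordinates

noncomputable def intCube (r N : ℕ) : Finset (Fin r → ℤ) :=
  Fintype.piFinset fun _ => Finset.Icc (-(N : ℤ)) N

theorem mem_intCube {r N : ℕ} {a : Fin r → ℤ} : a ∈ intCube r N ↔ ∀ i, |a i| ≤ N := by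
  simp [intCube, abs_le]

theorem card_intCube (r N : ℕ) : (intCube r N).card = (2 * N + 1) ^ r := by
  rw [intCube, Fintype.card_piFinset, Finset.prod_const, Finset.card_univ, Fintype.card_fin,
    Int.card_Icc]
  congr 1
  omega

theorem AddMonoidHom.exists_injective_ker_prod_of_mapsTo {G H : Type*} [AddCommGroup G]
    [AddCommGroup H] {c : G →+ H} {ℓ : H → G} (hcℓ : Function.LeftInverse c ℓ) {A : Set G}
    {B : Set H} (hAB : Set.MapsTo c A B) : ∃ f : A → c.ker × B, Function.Injective f := by
  refine ⟨fun g => (⟨g - ℓ (c g), by simp [hcℓ (c g)]⟩, ⟨c g, hAB g.2⟩), fun g g' h => ?_⟩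
  simp only [Prod.mk.injEq, Subtype.mk.injEq] at h
  ext
  simpa [h.2] using h.1

section Growth

variable {G : Type*} [AddCommGroup G] {S : Set G}

theorem exists_mapsTo_cayleyBall_intCube (hS : AddSubgroup.closure S = ⊤) (hfin : S.Finite)
    {r : ℕ} (c : G →+ (Fin r → ℤ)) :
    ∃ M : ℕ, ∀ n, Set.MapsTo c (cayleyBall S n) (intCube r (n * M)) := by
  obtain ⟨M, hM⟩ := ((hfin.prod (Set.finite_univ (α := Fin r))).image
    fun p => (c p.1 p.2).natAbs).bddAbove
  refine ⟨M, fun n g hg => mem_intCube.2 fun i => ?_⟩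
  have hMi : ∀ s ∈ S, |(Pi.evalAddMonoidHom _ i).comp c s| ≤ M := fun s hs => by
    rw [Int.abs_eq_natAbs]
    exact_mod_cast hM ⟨(s, i), ⟨hs, trivial⟩, rfl⟩
  calc |c g i| ≤ M * (cayley S).dist 0 g := by simpa using abs_le_mul_cayley_dist hS _ hMi g
    _ ≤ ((n * M : ℕ) : ℤ) := by
        have hgn : ((cayley S).dist 0 g : ℤ) ≤ n := by exact_mod_cast hg
        push_cast
        nlinarith

theorem cayley_dist_zero_map_le (hS : AddSubgroup.closure S = ⊤) {r : ℕ}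
    (ℓ : (Fin r → ℤ) →+ G) (a : Fin r → ℤ) :
    (cayley S).dist 0 (ℓ a) ≤ ∑ i, (a i).natAbs * (cayley S).dist 0 (ℓ (Pi.single i 1)) := by
  have hℓa : ℓ a = ∑ i, a i • ℓ (Pi.single i 1) := by
    conv_lhs => rw [← Finset.univ_sum_single a]
    simp only [map_sum, ← map_zsmul, ← Pi.single_smul, smul_eq_mul, mul_one]
  rw [hℓa]
  exact (cayley_dist_zero_sum_le hS _ _).trans
    (Finset.sum_le_sum fun i _ => cayley_dist_zero_zsmul_le hS _ _)

theorem exists_mapsTo_intCube_cayleyBall (hS : AddSubgroup.closure S = ⊤) {r : ℕ}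
    (ℓ : (Fin r → ℤ) →+ G) :
    ∃ D : ℕ, ∀ k, Set.MapsTo ℓ (intCube r k) (cayleyBall S (D * k)) := by
  refine ⟨∑ i, (cayley S).dist 0 (ℓ (Pi.single i 1)), fun k a ha => ?_⟩
  have hk (i : Fin r) : (a i).natAbs ≤ k := by
    have := mem_intCube.1 ha i
    rw [Int.abs_eq_natAbs] at this
    exact_mod_cast this
  calc (cayley S).dist 0 (ℓ a)
      ≤ ∑ i, (a i).natAbs * (cayley S).dist 0 (ℓ (Pi.single i 1)) :=
        cayley_dist_zero_map_le hS ℓ a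
    _ ≤ ∑ i, k * (cayley S).dist 0 (ℓ (Pi.single i 1)) := by gcongr with i; exact hk i
    _ = _ := by rw [← Finset.mul_sum, mul_comm]

variable [AddGroup.FG G]

theorem cayleyBall_finite_and_natCard_le (hS : AddSubgroup.closure S = ⊤) (hfin : S.Finite) :
    ∃ C : ℕ, ∀ n, (cayleyBall S n).Finite ∧ Nat.card (cayleyBall S n) ≤ C * (n + 1) ^ rk G := by
  obtain ⟨c, ℓ, hcℓ, hker⟩ := exists_leftInverse_ker_eq_torsion G
  have : Finite c.ker := by rw [hker]; exact finite_torsion G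
  obtain ⟨M, hM⟩ := exists_mapsTo_cayleyBall_intCube hS hfin c
  refine ⟨Nat.card c.ker * (2 * M + 1) ^ rk G, fun n => ?_⟩
  obtain ⟨f, hf⟩ := AddMonoidHom.exists_injective_ker_prod_of_mapsTo hcℓ (hM n)
  refine ⟨Set.finite_coe_iff.1 (Finite.of_injective f hf), ?_⟩
  calc Nat.card (cayleyBall S n) ≤ Nat.card (c.ker × intCube (rk G) (n * M)) :=
        Nat.card_le_card_of_injective f hf
    _ = Nat.card c.ker * (2 * (n * M) + 1) ^ rk G := by
        rw [Nat.card_prod, Nat.card_eq_finsetCard, card_intCube]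
    _ ≤ Nat.card c.ker * ((2 * M + 1) * (n + 1)) ^ rk G := by gcongr; nlinarith
    _ = Nat.card c.ker * (2 * M + 1) ^ rk G * (n + 1) ^ rk G := by rw [mul_pow, mul_assoc]

theorem exists_pow_le_natCard_cayleyBall (hS : AddSubgroup.closure S = ⊤) (hfin : S.Finite) :
    ∃ D : ℕ, ∀ k, (k + 1) ^ rk G ≤ Nat.card (cayleyBall S (D * k)) := by
  obtain ⟨c, ℓ, hcℓ, -⟩ := exists_leftInverse_ker_eq_torsion G
  obtain ⟨C, hC⟩ := cayleyBall_finite_and_natCard_le hS hfin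
  obtain ⟨D, hD⟩ := exists_mapsTo_intCube_cayleyBall hS ℓ
  refine ⟨D, fun k => ?_⟩
  have : Finite (cayleyBall S (D * k)) := (hC _).1
  calc (k + 1) ^ rk G ≤ (2 * k + 1) ^ rk G := by gcongr; omega
    _ = Nat.card (intCube (rk G) k) := by rw [Nat.card_eq_finsetCard, card_intCube]
    _ ≤ Nat.card (cayleyBall S (D * k)) :=
        Nat.card_le_card_of_injective (hD k).restrict ((hD k).restrict_inj.2 hcℓ.injective.injOn)

end Growth

theorem le_of_pow_le_mul_pow {r s C : ℕ} (h : ∀ k : ℕ, (k + 1) ^ r ≤ C * (k + 1) ^ s) :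
    r ≤ s := by
  by_contra! hsr
  have hpos : 0 < (C + 1) ^ s := by positivity
  have : (C + 1) * (C + 1) ^ s ≤ C * (C + 1) ^ s :=
    calc (C + 1) * (C + 1) ^ s = (C + 1) ^ (s + 1) := by ring
      _ ≤ (C + 1) ^ r := Nat.pow_le_pow_right (by omega) hsr
      _ ≤ C * (C + 1) ^ s := h C
  have := Nat.le_of_mul_le_mul_right this hpos
  omega

theorem rank_le_of_iso_cayley {G G' : Type*} [AddCommGroup G] [AddCommGroup G']
    [AddGroup.FG G] [AddGroup.FG G'] {S : Set G} {S' : Set G'} (hfin : S.Finite)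
    (hS : AddSubgroup.closure S = ⊤) (hfin' : S'.Finite) (hS' : AddSubgroup.closure S' = ⊤)
    (φ : cayley S ≃g cayley S') : rk G ≤ rk G' := by
  obtain ⟨D, hD⟩ := exists_pow_le_natCard_cayleyBall hS hfin
  obtain ⟨C, hC⟩ := cayleyBall_finite_and_natCard_le hS' hfin'
  refine le_of_pow_le_mul_pow (C := C * (D + 1) ^ rk G') fun k => ?_
  calc _ ≤ Nat.card (cayleyBall S (D * k)) := hD k
    _ = Nat.card (cayleyBall S' (D * k)) := natCard_cayleyBall_eq_of_iso φ _
    _ ≤ C * (D * k + 1) ^ rk G' := (hC _).2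
    _ ≤ C * ((D + 1) * (k + 1)) ^ rk G' := by gcongr; nlinarith
    _ = _ := by rw [mul_pow, mul_assoc]

/-- Finitely generated Abelian groups that admit isomorphic Cayley graphs have the same
rank, i.e. their quotients by torsion have the same rank as free Abelian groups. -/
theorem rank_eq_of_iso_cayley {G G' : Type*} [AddCommGroup G] [AddCommGroup G']
    [AddGroup.FG G] [AddGroup.FG G']
    (h : ∃ (S : Set G) (S' : Set G'),
        S.Finite ∧ AddSubgroup.closure S = ⊤ ∧
        S'.Finite ∧ AddSubgroup.closure S' = ⊤ ∧
        Nonempty (cayley S ≃g cayley S')) :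
    Module.finrank ℤ (G ⧸ AddCommGroup.torsion G) =
      Module.finrank ℤ (G' ⧸ AddCommGroup.torsion G') := by
  obtain ⟨S, S', hfin, hS, hfin', hS', ⟨φ⟩⟩ := h
  exact le_antisymm (rank_le_of_iso_cayley hfin hS hfin' hS' φ)
    (rank_le_of_iso_cayley hfin' hS' hfin hS φ.symm)
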